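/- arXiv:math/0301105 — 2 statements merged into one kernel-verified Lean document; each statement's English description precedes it below -/
import Mathlib

section
/- Let θ : ℝ → ℝ be differentiable, g₁₂ : ℝ → ℝ nonvanishing, ε : ℝ, and ρ, ρσ : ℝ. Suppose that for all x¹ : ℝ with ε·x¹ + θ(x²) ≠ 0 (for a fixed x²), ρ - ρσ + ε·θ'(x²)/((ε·x¹ + θ(x²))²·g₁₂(x²)) = 0. If there exist two distinct values x¹ making the expression (ε·x¹ + θ(x²))² take distinct nonzero values, or if the identity holds for all x¹ in a nonempty open set, then ε·θ'(x²) = 0 and ρ = ρσ. Conversely, if ε = 0 and ρ = ρσ then the displayed identity holds for all x¹ with θ(x²) ≠ 0. -/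
/-- Equivalence of χ₂ - ρ_{σ2} = 0 with ρ₂ - ρ_{σ2} = 0 and ε = 0 for the type [2211] h-space. -/
theorem stmt_2 (θ : ℝ → ℝ) (hθ : Differentiable ℝ θ) (g₁₂ : ℝ → ℝ)
    (hg : ∀ x, g₁₂ x ≠ 0) (ε : ℝ) (ρ ρσ : ℝ) (x2 : ℝ) :
    ((∃ s : Set ℝ, IsOpen s ∧ s.Nonempty ∧ ∀ x1 ∈ s, ε * x1 + θ x2 ≠ 0 ∧
        ρ - ρσ + ε * deriv θ x2 / ((ε * x1 + θ x2) ^ 2 * g₁₂ x2) = 0) →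
      ε * deriv θ x2 = 0 ∧ ρ = ρσ) ∧
    (ε = 0 → ρ = ρσ → ∀ x1 : ℝ, θ x2 ≠ 0 →
      ρ - ρσ + ε * deriv θ x2 / ((ε * x1 + θ x2) ^ 2 * g₁₂ x2) = 0) := by
  constructor
  · rintro ⟨s, hs, ⟨a, ha⟩, h⟩
    have key : ε * deriv θ x2 = 0 := by
      by_cases hε : ε = 0
      · simp [hε]
      · by_contra hc
        obtain ⟨r, hr, hball⟩ := Metric.isOpen_iff.mp hs a ha
        set bp := a - 2 * (ε * a + θ x2) / ε with hbp
        obtain ⟨b, hb1, hb2, hb3⟩ : ∃ b, b ∈ Metric.ball a r ∧ b ≠ a ∧ b ≠ bp := by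
          by_cases h1 : a + r / 2 = bp
          · refine ⟨a + r / 3, ?_, ?_, ?_⟩
            · simp [Metric.mem_ball, Real.dist_eq, abs_of_pos]
              rw [abs_of_pos] <;> linarith
            · intro hcon; nlinarith
            · rw [← h1]; intro hcon; nlinarith
          · refine ⟨a + r / 2, ?_, ?_, h1⟩
            · simp [Metric.mem_ball, Real.dist_eq]
              rw [abs_of_pos] <;> linarith
            · intro hcon; nlinarith
        obtain ⟨hAa, hea⟩ := h a ha
        obtain ⟨hAb, heb⟩ := h b (hball hb1)
        have hga := hg x2
        have hda : (ε * a + θ x2) ^ 2 * g₁₂ x2 ≠ 0 := mul_ne_zero (pow_ne_zero _ hAa) hga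
        have hdb : (ε * b + θ x2) ^ 2 * g₁₂ x2 ≠ 0 := mul_ne_zero (pow_ne_zero _ hAb) hga
        have heq : ε * deriv θ x2 / ((ε * a + θ x2) ^ 2 * g₁₂ x2)
            = ε * deriv θ x2 / ((ε * b + θ x2) ^ 2 * g₁₂ x2) := by linarith
        rw [div_eq_div_iff hda hdb] at heq
        have hsq : (ε * b + θ x2) ^ 2 = (ε * a + θ x2) ^ 2 :=
          mul_right_cancel₀ hga (mul_left_cancel₀ hc heq)
        rcases sq_eq_sq_iff_eq_or_eq_neg.mp hsq with h2 | h2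
        · exact hb2 (mul_left_cancel₀ hε (by linarith))
        · apply hb3
          rw [hbp]
          field_simp
          linarith
    refine ⟨key, ?_⟩
    obtain ⟨hAa, hea⟩ := h a ha
    rw [key] at hea
    simp at hea
    linarith
  · intro hε hρ x1 hθ2
    simp [hε, hρ]
end

section
/- Let c₅, c₆ : ℝ, f₅ ≠ f₆ reals, s ≠ t reals with s, t ∉ {f₅, f₆}. If c₅/((f₅-s)²(f₅-t)) + c₆/((f₆-s)²(f₆-t)) = 0 and c₅/((f₅-t)²(f₅-s)) + c₆/((f₆-t)²(f₆-s)) = 0, and additionally c₅/(f₅-s)³ + c₆/(f₆-s)³ = 0, then c₅ = c₆ = 0. -/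
/-- Three rational equations force both coefficients to vanish (type [2211] sufficiency). -/
theorem stmt_17 (c₅ c₆ f₅ f₆ s t : ℝ) (h56 : f₅ ≠ f₆) (hst : s ≠ t)
    (hs5 : s ≠ f₅) (hs6 : s ≠ f₆) (ht5 : t ≠ f₅) (ht6 : t ≠ f₆)
    (h1 : c₅ / ((f₅ - s) ^ 2 * (f₅ - t)) + c₆ / ((f₆ - s) ^ 2 * (f₆ - t)) = 0)
    (h2 : c₅ / ((f₅ - t) ^ 2 * (f₅ - s)) + c₆ / ((f₆ - t) ^ 2 * (f₆ - s)) = 0)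
    (h3 : c₅ / (f₅ - s) ^ 3 + c₆ / (f₆ - s) ^ 3 = 0) :
    c₅ = 0 ∧ c₆ = 0 := by
  have ha : f₅ - s ≠ 0 := sub_ne_zero.2 (Ne.symm hs5)
  have hb : f₅ - t ≠ 0 := sub_ne_zero.2 (Ne.symm ht5)
  have hc : f₆ - s ≠ 0 := sub_ne_zero.2 (Ne.symm hs6)
  have hd : f₆ - t ≠ 0 := sub_ne_zero.2 (Ne.symm ht6)
  have hkey : (f₆ - s) * (f₅ - t) - (f₅ - s) * (f₆ - t) ≠ 0 := by
    intro h
    have h56' : f₅ - f₆ ≠ 0 := sub_ne_zero.2 h56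
    have hts : t - s ≠ 0 := sub_ne_zero.2 (fun h' => hst (by linarith))
    have : (t - s) * (f₅ - f₆) = 0 := by linarith [h]; 
    rcases mul_eq_zero.1 this with h' | h'
    · exact hts h'
    · exact h56' h'
  field_simp at h1 h3
  have h4 : c₆ * ((f₅ - s) ^ 2 * ((f₆ - s) * (f₅ - t) - (f₅ - s) * (f₆ - t))) = 0 := by
    linear_combination (f₆ - s) * h1 - (f₆ - t) * h3
  have hc6 : c₆ = 0 := by
    rcases mul_eq_zero.1 h4 with h | h
    · exact h
    · exact absurd h (mul_ne_zero (pow_ne_zero 2 ha) hkey)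
  have hc5 : c₅ = 0 := by
    rcases mul_eq_zero.1 (show c₅ * (f₆ - s) ^ 3 = 0 by linear_combination h3 - (f₅ - s)^3 * hc6) with h | h
    · exact h
    · exact absurd h (pow_ne_zero 3 hc)
  exact ⟨hc5, hc6⟩
end
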